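/- Assume M₁ᵏ − L·Id ∈ S₊(H), M₁ᵏ ⪰ M₁^{k+1}, M₂ᵏ ∈ S₊(G), M₂ᵏ ⪰ M₂^{k+1} for all k ≥ 0, let (xᵏ, zᵏ, yᵏ)_{k≥0} be the sequence generated by the variable-metric ADMM algorithm, and let (x*, z*, y*) be a saddle point of the Lagrangian l. With the ergodic averages x̄ᵏ := (1/k)Σ_{i=1}^{k} xⁱ and z̄ᵏ := (1/k)Σ_{i=1}^{k} zⁱ, for all k ≥ 1: f(x̄ᵏ) + h(x̄ᵏ) + g(z̄ᵏ) + ⟨y*, Ax̄ᵏ − z̄ᵏ⟩ − (f(x*) + h(x*) + g(Ax*)) ≤ γ(x*, z*, y*)/k, where γ(x, z, y) := (c/2)‖Ax − z⁰‖² + (1/2)(‖x − x⁰‖²_{M₁⁰} + ‖z − z⁰‖²_{M₂⁰}) + (1/(2c))‖y − y⁰‖². -/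

import Mathlib

open scoped InnerProductSpace
open Filter

noncomputable section

section OpDefs

variable {E F : Type*} [NormedAddCommGroup E] [InnerProductSpace ℝ E]
  [NormedAddCommGroup F] [InnerProductSpace ℝ F]

/-- `U ∈ S₊(E)`: continuous linear, self-adjoint and positive semidefinite. -/
def IsSplusOp (U : E →L[ℝ] E) : Prop :=
  (∀ x y : E, ⟪U x, y⟫_ℝ = ⟪x, U y⟫_ℝ) ∧ ∀ x : E, 0 ≤ ⟪x, U x⟫_ℝ

/-- The squared seminorm `‖x‖²_U := ⟪x, U x⟫`. -/
def opSq (U : E →L[ℝ] E) (x : E) : ℝ := ⟪x, U x⟫_ℝ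

/-- Loewner order `U ⪰ V`. -/
def opLE (U V : E →L[ℝ] E) : Prop := ∀ x : E, ⟪x, V x⟫_ℝ ≤ ⟪x, U x⟫_ℝ

/-- `U ∈ P_α(E)`, i.e. `U ∈ S₊(E)` and `U ⪰ α·Id`. -/
def IsPalphaOp (α : ℝ) (U : E →L[ℝ] E) : Prop :=
  IsSplusOp U ∧ ∀ x : E, α * ‖x‖ ^ 2 ≤ ⟪x, U x⟫_ℝ

/-- Properness of an extended-real-valued function. -/
def ERealProper (f : E → EReal) : Prop := (∀ x, f x ≠ ⊥) ∧ ∃ x, f x ≠ ⊤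

/-- Convexity of an extended-real-valued function. -/
def ERealConvex (f : E → EReal) : Prop :=
  ∀ x y : E, ∀ a b : ℝ, 0 ≤ a → 0 ≤ b → a + b = 1 →
    f (a • x + b • y) ≤ (a : EReal) * f x + (b : EReal) * f y

/-- Weak convergence of a sequence in a Hilbert space, tested against inner products. -/
def WeakConv (u : ℕ → E) (p : E) : Prop :=
  ∀ w : E, Tendsto (fun k => ⟪u k, w⟫_ℝ) atTop (nhds ⟪p, w⟫_ℝ)

/-- The Lagrangian `l(x,z,y) = f(x) + g(z) + ⟪y, Ax - z⟫`. -/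
def Lagr (f : E → EReal) (g : F → EReal) (A : E →L[ℝ] F) (p : E) (q v : F) : EReal :=
  f p + g q + ((⟪v, A p - q⟫_ℝ : ℝ) : EReal)

/-- The Lagrangian with an additional smooth summand `h`:
`l(x,z,y) = f(x) + h(x) + g(z) + ⟪y, Ax - z⟫`. -/
def LagrH (f : E → EReal) (h : E → ℝ) (g : F → EReal) (A : E →L[ℝ] F)
    (p : E) (q v : F) : EReal :=
  f p + ((h p : ℝ) : EReal) + g q + ((⟪v, A p - q⟫_ℝ : ℝ) : EReal)

/-- `(xs, zs, ys)` is a saddle point of `l`. -/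
def IsSaddle (l : E → F → F → EReal) (xs : E) (zs ys : F) : Prop :=
  ∀ (p : E) (q v : F), l xs zs v ≤ l xs zs ys ∧ l xs zs ys ≤ l p q ys

/-- `xk1` is a minimizer of `u ↦ f u + (c/2)‖Au - zk + c⁻¹ yk‖² + (1/2)‖u - xk‖²_M`. -/
def IsXUpdate (f : E → EReal) (A : E →L[ℝ] F) (c : ℝ) (M : E →L[ℝ] E)
    (xk : E) (zk yk : F) (xk1 : E) : Prop :=
  ∀ u : E,
    f xk1 + (((c/2) * ‖A xk1 - zk + c⁻¹ • yk‖ ^ 2 + (1/2) * opSq M (xk1 - xk) : ℝ) : EReal) ≤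
    f u + (((c/2) * ‖A u - zk + c⁻¹ • yk‖ ^ 2 + (1/2) * opSq M (u - xk) : ℝ) : EReal)

/-- `xk1` is a minimizer of the `x`-subproblem with linearized smooth part:
`u ↦ f u + ⟪u - xk, ∇h(xk)⟫ + (c/2)‖Au - zk + c⁻¹ yk‖² + (1/2)‖u - xk‖²_M`. -/
def IsXUpdateGrad (f : E → EReal) (h' : E → E) (A : E →L[ℝ] F) (c : ℝ) (M : E →L[ℝ] E)
    (xk : E) (zk yk : F) (xk1 : E) : Prop :=
  ∀ u : E,
    f xk1 + ((⟪xk1 - xk, h' xk⟫_ℝ + (c/2) * ‖A xk1 - zk + c⁻¹ • yk‖ ^ 2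
        + (1/2) * opSq M (xk1 - xk) : ℝ) : EReal) ≤
    f u + ((⟪u - xk, h' xk⟫_ℝ + (c/2) * ‖A u - zk + c⁻¹ • yk‖ ^ 2
        + (1/2) * opSq M (u - xk) : ℝ) : EReal)

/-- `zk1` is a minimizer of `w ↦ g w + (c/2)‖Ax - w + c⁻¹ yk‖² + (1/2)‖w - zk‖²_M`. -/
def IsZUpdate (g : F → EReal) (c : ℝ) (M : F →L[ℝ] F)
    (Ax zk yk zk1 : F) : Prop :=
  ∀ w : F,
    g zk1 + (((c/2) * ‖Ax - zk1 + c⁻¹ • yk‖ ^ 2 + (1/2) * opSq M (zk1 - zk) : ℝ) : EReal) ≤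
    g w + (((c/2) * ‖Ax - w + c⁻¹ • yk‖ ^ 2 + (1/2) * opSq M (w - zk) : ℝ) : EReal)

end OpDefs


/-!
Each iteration decreases the Lyapunov function
`Eₖ = (c/2)‖z* - zᵏ‖² + ½(‖x* - xᵏ‖²_{M₁ᵏ} + ‖z* - zᵏ‖²_{M₂ᵏ}) + (1/2c)‖y* - yᵏ‖²`
by at least the Lagrangian gap `l(xᵏ⁺¹, zᵏ⁺¹, y*) - l(x*, z*, y*)`. The `x`- and `z`-updates
minimize a convex function plus a quadratic, so they satisfy three-point inequalities; the error
of linearizing `h` is at most `(L/2)‖xᵏ⁺¹ - xᵏ‖²` (descent lemma) and is absorbed by `M₁ᵏ ⪰ L·Id`;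
the dual update makes the multiplier cross terms telescope; `Mᵏ ⪰ Mᵏ⁺¹` lets the metrics change.
Summing over the first `k` iterations bounds the total gap by `E₀ = γ(x*, z*, y*)`, and Jensen's
inequality for the convex gap turns this into the ergodic `γ / k` bound.
-/

section Quadratic

variable {E F : Type*} [NormedAddCommGroup E] [InnerProductSpace ℝ E]
  [NormedAddCommGroup F] [InnerProductSpace ℝ F]

/-- On the line through `m` and `u`, `q` is a quadratic polynomial with leading coefficient `Q`. -/
def IsQuadraticAlong (q : E → ℝ) (m u : E) (Q : ℝ) : Prop :=
  ∀ t : ℝ, q ((1 - t) • m + t • u) = (1 - t) * q m + t * q u - t * (1 - t) * Q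

namespace IsQuadraticAlong

variable {q q' : E → ℝ} {m u : E} {Q Q' : ℝ}

theorem add (hq : IsQuadraticAlong q m u Q) (hq' : IsQuadraticAlong q' m u Q') :
    IsQuadraticAlong (fun w => q w + q' w) m u (Q + Q') := fun t => by
  dsimp only; rw [hq t, hq' t]; ring

theorem const_mul (hq : IsQuadraticAlong q m u Q) (a : ℝ) :
    IsQuadraticAlong (fun w => a * q w) m u (a * Q) := fun t => by
  dsimp only; rw [hq t]; ring

theorem congr (hq : IsQuadraticAlong q m u Q) (h : ∀ w, q w = q' w) :
    IsQuadraticAlong q' m u Q := by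
  rwa [← funext h]

theorem comp {q : F → ℝ} (A : E →L[ℝ] F) (hq : IsQuadraticAlong q (A m) (A u) Q) :
    IsQuadraticAlong (fun w => q (A w)) m u Q := fun t => by
  simpa only [map_add, map_smul] using hq t

end IsQuadraticAlong

theorem isQuadraticAlong_inner_sub (a e m u : E) :
    IsQuadraticAlong (fun w => ⟪w - a, e⟫_ℝ) m u 0 := fun t => by
  simp only [inner_sub_left, inner_add_left, real_inner_smul_left]; ring

theorem isQuadraticAlong_opSq_sub (M : E →L[ℝ] E) (a m u : E) :
    IsQuadraticAlong (fun w => opSq M (w - a)) m u (opSq M (u - m)) := fun t => by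
  simp only [opSq, map_sub, map_add, map_smul, inner_sub_left, inner_sub_right, inner_add_left,
    inner_add_right, real_inner_smul_left, real_inner_smul_right]
  ring

theorem isQuadraticAlong_norm_sq_sub (b m u : E) :
    IsQuadraticAlong (fun w => ‖w - b‖ ^ 2) m u (‖u - m‖ ^ 2) := by
  simpa only [opSq, ContinuousLinearMap.id_apply, real_inner_self_eq_norm_sq] using
    isQuadraticAlong_opSq_sub (ContinuousLinearMap.id ℝ E) b m u

/-- Three-point inequality for a minimizer `m` of `f + q`. -/
theorem ERealConvex.add_le_of_isQuadraticAlong {f : E → EReal} (hf : ERealConvex f)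
    {q : E → ℝ} {m u : E} {Q a b : ℝ} (hq : IsQuadraticAlong q m u Q)
    (hmin : ∀ w, f m + (q m : EReal) ≤ f w + (q w : EReal)) (ha : f m = a) (hb : f u = b) :
    a + q m + Q ≤ b + q u := by
  have hsmall : ∀ t ∈ Set.Ioo (0 : ℝ) 1, a + q m + (1 - t) * Q ≤ b + q u := by
    rintro t ⟨ht0, ht1⟩
    have hconv := hf m u (1 - t) t (by linarith) ht0.le (by ring)
    have hw := (hmin _).trans (add_le_add_left hconv _)
    rw [ha, hb, hq t, ← EReal.coe_mul, ← EReal.coe_mul, ← EReal.coe_add, ← EReal.coe_add,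
      ← EReal.coe_add, EReal.coe_le_coe_iff] at hw
    have : t * (a + q m + (1 - t) * Q) ≤ t * (b + q u) := by nlinarith
    exact le_of_mul_le_mul_left this ht0
  have hlim : Tendsto (fun t : ℝ => a + q m + (1 - t) * Q) (nhdsWithin 0 (Set.Ioi 0))
      (nhds (a + q m + Q)) := by
    have : Continuous fun t : ℝ => a + q m + (1 - t) * Q := by fun_prop
    simpa using (this.tendsto 0).mono_left nhdsWithin_le_nhds
  exact le_of_tendsto hlim (mem_of_superset (Ioo_mem_nhdsGT one_pos) hsmall)

end Quadratic

theorem EReal.ne_top_of_add_coe_le {a b : EReal} {r s : ℝ} (h : a + r ≤ b + s) (hb : b ≠ ⊤) :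
    a ≠ ⊤ := by
  rintro rfl
  rw [EReal.top_add_coe, top_le_iff] at h
  exact EReal.add_ne_top hb (EReal.coe_ne_top s) h

section Average

open Finset

variable {E F ι : Type*} [NormedAddCommGroup E] [InnerProductSpace ℝ E]
  [NormedAddCommGroup F] [InnerProductSpace ℝ F]

theorem ERealConvex.le_coe_toReal_combo {f : E → EReal} (hf : ERealConvex f)
    (hfb : ∀ p, f p ≠ ⊥) {p p' : E} (hp : f p ≠ ⊤) (hp' : f p' ≠ ⊤) {a b : ℝ} (ha : 0 ≤ a)
    (hb : 0 ≤ b) (hab : a + b = 1) :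
    f (a • p + b • p') ≤ ((a * (f p).toReal + b * (f p').toReal : ℝ) : EReal) := by
  have := hf p p' a b ha hb hab
  rwa [← EReal.coe_toReal hp (hfb p), ← EReal.coe_toReal hp' (hfb p'), ← EReal.coe_mul,
    ← EReal.coe_mul, ← EReal.coe_add] at this

theorem ERealConvex.convexOn_toReal {f : E → EReal} (hf : ERealConvex f) (hfb : ∀ p, f p ≠ ⊥) :
    ConvexOn ℝ {p | f p ≠ ⊤} (fun p => (f p).toReal) := by
  refine ⟨fun p hp p' hp' a b ha hb hab => ?_, fun p hp p' hp' a b ha hb hab => ?_⟩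
  · exact ne_top_of_le_ne_top (EReal.coe_ne_top _) (hf.le_coe_toReal_combo hfb hp hp' ha hb hab)
  · exact EReal.toReal_le_toReal (hf.le_coe_toReal_combo hfb hp hp' ha hb hab) (hfb _)
      (EReal.coe_ne_top _)

theorem Finset.sum_inv_card_eq_one (t : Finset ι) (ht : t.Nonempty) : ∑ _i ∈ t, (#t : ℝ)⁻¹ = 1 := by
  rw [sum_const, nsmul_eq_mul, mul_inv_cancel₀ (by exact_mod_cast ht.card_pos.ne')]

theorem Convex.avg_mem {s : Set E} (hs : Convex ℝ s) {t : Finset ι} (ht : t.Nonempty)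
    {p : ι → E} (hp : ∀ i ∈ t, p i ∈ s) : (#t : ℝ)⁻¹ • ∑ i ∈ t, p i ∈ s := by
  rw [smul_sum]
  exact hs.sum_mem (fun _ _ => by positivity) (sum_inv_card_eq_one t ht) hp

theorem ConvexOn.map_avg_le {s : Set E} {φ : E → ℝ} (hφ : ConvexOn ℝ s φ) {t : Finset ι}
    (ht : t.Nonempty) {p : ι → E} (hp : ∀ i ∈ t, p i ∈ s) :
    φ ((#t : ℝ)⁻¹ • ∑ i ∈ t, p i) ≤ (#t : ℝ)⁻¹ * ∑ i ∈ t, φ (p i) := by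
  rw [smul_sum, mul_sum]
  exact hφ.map_sum_le (fun _ _ => by positivity) (sum_inv_card_eq_one t ht) hp

theorem ERealConvex.map_avg_le {f : E → EReal} (hf : ERealConvex f) (hfb : ∀ p, f p ≠ ⊥)
    {t : Finset ι} (ht : t.Nonempty) {p : ι → E} {a : ι → ℝ} (ha : ∀ i ∈ t, f (p i) = a i) :
    f ((#t : ℝ)⁻¹ • ∑ i ∈ t, p i) ≤ (((#t : ℝ)⁻¹ * ∑ i ∈ t, a i : ℝ) : EReal) := by
  have hdom : ∀ i ∈ t, p i ∈ {p | f p ≠ ⊤} := fun i hi => by simp [ha i hi]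
  have hconv := hf.convexOn_toReal hfb
  rw [← EReal.coe_toReal (hconv.1.avg_mem ht hdom) (hfb _), EReal.coe_le_coe_iff]
  refine (hconv.map_avg_le ht hdom).trans_eq ?_
  congr 1
  exact sum_congr rfl fun i hi => by simp [ha i hi]

theorem lagrH_avg_sub_le {f : E → EReal} {g : F → EReal} {h : E → ℝ}
    (hfc : ERealConvex f) (hfb : ∀ p, f p ≠ ⊥) (hgc : ERealConvex g) (hgb : ∀ q, g q ≠ ⊥)
    (hconv : ConvexOn ℝ Set.univ h) (A : E →L[ℝ] F) {t : Finset ι} (ht : t.Nonempty)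
    {p : ι → E} {q : ι → F} {a b : ι → ℝ} (ha : ∀ i ∈ t, f (p i) = a i)
    (hb : ∀ i ∈ t, g (q i) = b i) (v : F) {ℓ C : ℝ}
    (hsum : ∑ i ∈ t, (a i + h (p i) + b i + ⟪v, A (p i) - q i⟫_ℝ - ℓ) ≤ C) :
    LagrH f h g A ((#t : ℝ)⁻¹ • ∑ i ∈ t, p i) ((#t : ℝ)⁻¹ • ∑ i ∈ t, q i) v - (ℓ : EReal) ≤
      ((C / #t : ℝ) : EReal) := by
  set n : ℝ := (t.card : ℝ)
  have hn : 0 < n := Nat.cast_pos.2 ht.card_pos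
  have hf := hfc.map_avg_le hfb ht ha
  have hg := hgc.map_avg_le hgb ht hb
  have hh := hconv.map_avg_le ht (p := p) fun _ _ => Set.mem_univ _
  have hlin : ⟪v, A (n⁻¹ • ∑ i ∈ t, p i) - n⁻¹ • ∑ i ∈ t, q i⟫_ℝ =
      n⁻¹ * ∑ i ∈ t, ⟪v, A (p i) - q i⟫_ℝ := by
    rw [map_smul, map_sum, ← smul_sub, ← sum_sub_distrib, real_inner_smul_right, inner_sum]
  have hC : n⁻¹ * ∑ i ∈ t, (a i + h (p i) + b i + ⟪v, A (p i) - q i⟫_ℝ) ≤ C / n + ℓ := by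
    rw [sum_sub_distrib, sum_const, nsmul_eq_mul] at hsum
    rw [div_eq_inv_mul, inv_mul_le_iff₀ hn, mul_add, mul_inv_cancel_left₀ hn.ne']
    linarith
  simp only [sum_add_distrib, mul_add] at hC
  unfold LagrH
  rw [hlin, EReal.sub_le_iff_le_add (by simp) (by simp)]
  calc _ ≤ ((n⁻¹ * ∑ i ∈ t, a i : ℝ) : EReal) + ((n⁻¹ * ∑ i ∈ t, h (p i) : ℝ) : EReal)
        + ((n⁻¹ * ∑ i ∈ t, b i : ℝ) : EReal)
        + ((n⁻¹ * ∑ i ∈ t, ⟪v, A (p i) - q i⟫_ℝ : ℝ) : EReal) := by gcongr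
    _ ≤ _ := by exact_mod_cast hC

end Average

section Smooth

open AffineMap

variable {H : Type*} [NormedAddCommGroup H] [InnerProductSpace ℝ H] [CompleteSpace H]
  {h : H → ℝ}

theorem HasGradientAt.hasDerivAt_comp_lineMap {g x y : H} {t : ℝ}
    (hg : HasGradientAt h g (lineMap x y t)) :
    HasDerivAt (fun s : ℝ => h (lineMap x y s)) ⟪g, y - x⟫_ℝ t := by
  have := hg.hasFDerivAt.comp_hasDerivAt t (hasDerivAt_lineMap (a := x) (b := y))
  rwa [InnerProductSpace.toDual_apply_apply] at this

theorem ConvexOn.add_inner_le_of_hasGradientAt {s : Set H} (hconv : ConvexOn ℝ s h)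
    {g p w : H} (hp : p ∈ s) (hw : w ∈ s) (hg : HasGradientAt h g p) :
    h p + ⟪w - p, g⟫_ℝ ≤ h w := by
  have hline : ConvexOn ℝ (lineMap p w ⁻¹' s) (fun t => h (lineMap p w t)) :=
    hconv.comp_affineMap (lineMap p w)
  have hderiv : HasDerivAt (fun t : ℝ => h (lineMap p w t)) ⟪g, w - p⟫_ℝ 0 :=
    HasGradientAt.hasDerivAt_comp_lineMap (by simpa using hg)
  have := hline.le_slope_of_hasDerivAt (by simpa using hp) (by simpa using hw) one_pos hderiv
  simp only [slope_def_field, lineMap_apply_zero, lineMap_apply_one, sub_zero, div_one] at this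
  rw [real_inner_comm]
  linarith

theorem le_add_inner_add_of_lipschitzWith_gradient {h' : H → H} {K : NNReal}
    (hgrad : ∀ p, HasGradientAt h (h' p) p) (hlip : LipschitzWith K h') (x y : H) :
    h y ≤ h x + ⟪y - x, h' x⟫_ℝ + K / 2 * ‖y - x‖ ^ 2 := by
  set d := y - x
  let φ : ℝ → ℝ := fun t => h (lineMap x y t) - t * ⟪h' x, d⟫_ℝ - K / 2 * t ^ 2 * ‖d‖ ^ 2
  let φ' : ℝ → ℝ := fun t => ⟪h' (lineMap x y t), d⟫_ℝ - ⟪h' x, d⟫_ℝ - K * t * ‖d‖ ^ 2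
  have hφ : ∀ t, HasDerivAt φ (φ' t) t := by
    intro t
    have h1 : HasDerivAt (fun s => h (lineMap x y s)) ⟪h' (lineMap x y t), d⟫_ℝ t :=
      (hgrad _).hasDerivAt_comp_lineMap
    have h2 := (hasDerivAt_id' t).mul_const ⟪h' x, d⟫_ℝ
    have h3 := ((hasDerivAt_pow 2 t).const_mul (K / 2 : ℝ)).mul_const (‖d‖ ^ 2)
    exact ((h1.sub h2).sub h3).congr_deriv (by push_cast; ring)
  have hφ' : ∀ t ∈ interior (Set.Ici (0 : ℝ)), φ' t ≤ 0 := by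
    intro t ht
    rw [interior_Ici, Set.mem_Ioi] at ht
    have hdist : ‖h' (lineMap x y t) - h' x‖ ≤ K * (t * ‖d‖) := by
      simpa [dist_eq_norm, lineMap_apply, norm_smul, abs_of_pos ht] using
        hlip.dist_le_mul (lineMap x y t) x
    have := (real_inner_le_norm (h' (lineMap x y t) - h' x) d).trans
      (mul_le_mul_of_nonneg_right hdist (norm_nonneg d))
    rw [inner_sub_left] at this
    nlinarith
  have hanti : AntitoneOn φ (Set.Ici 0) :=
    antitoneOn_of_hasDerivWithinAt_nonpos (convex_Ici 0)
      (fun t _ => (hφ t).continuousAt.continuousWithinAt)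
      (fun t _ => (hφ t).hasDerivWithinAt) hφ'
  have := hanti Set.self_mem_Ici (Set.mem_Ici.2 zero_le_one) zero_le_one
  simp only [φ, lineMap_apply_zero, lineMap_apply_one] at this
  rw [real_inner_comm]
  linarith

end Smooth

section Operators

variable {H G : Type*} [NormedAddCommGroup H] [InnerProductSpace ℝ H]
  [NormedAddCommGroup G] [InnerProductSpace ℝ G]

theorem IsSplusOp.mul_norm_sq_le_opSq {M : H →L[ℝ] H} {L : ℝ}
    (hM : IsSplusOp (M - L • ContinuousLinearMap.id ℝ H)) (d : H) :
    L * ‖d‖ ^ 2 ≤ opSq M d := by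
  have := hM.2 d
  rw [sub_apply, smul_apply, ContinuousLinearMap.id_apply, inner_sub_right,
    real_inner_smul_right, real_inner_self_eq_norm_sq] at this
  unfold opSq
  linarith

/-- The Lyapunov function of the iteration; its value at the initial point is the constant
`γ(xs, zs, ys)` of the bound once `A xs = zs`. -/
def admmEnergy (c : ℝ) (M₁ : H →L[ℝ] H) (M₂ : G →L[ℝ] G) (xs : H) (zs ys : G)
    (x : H) (z y : G) : ℝ :=
  (c/2) * ‖zs - z‖ ^ 2 + (1/2) * (opSq M₁ (xs - x) + opSq M₂ (zs - z))
    + (1/(2*c)) * ‖ys - y‖ ^ 2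

theorem admmEnergy_nonneg {c : ℝ} (hc : 0 < c) {M₁ : H →L[ℝ] H} {M₂ : G →L[ℝ] G}
    (hM₁ : IsSplusOp M₁) (hM₂ : IsSplusOp M₂) (xs : H) (zs ys : G) (x : H) (z y : G) :
    0 ≤ admmEnergy c M₁ M₂ xs zs ys x z y := by
  have := hM₁.2 (xs - x)
  have := hM₂.2 (zs - z)
  unfold admmEnergy opSq
  positivity

theorem multiplier_identity (a b zs zk u v : G) :
    ⟪v, a - b⟫_ℝ + (1/2) * (‖zs - zk + u‖ ^ 2 - ‖a - zk + u‖ ^ 2 - ‖zs - a‖ ^ 2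
      + ‖a - zs + u‖ ^ 2 - ‖a - b + u‖ ^ 2 - ‖zs - b‖ ^ 2)
    = (1/2) * (‖zs - zk‖ ^ 2 - ‖zs - b‖ ^ 2)
      + (1/2) * (‖v - u‖ ^ 2 - ‖v - u - (a - b)‖ ^ 2) - (1/2) * ‖a - zk‖ ^ 2 := by
  simp only [← real_inner_self_eq_norm_sq, inner_add_left, inner_add_right,
    inner_sub_left, inner_sub_right]
  linarith [real_inner_comm a b, real_inner_comm a zs, real_inner_comm a zk,
    real_inner_comm a u, real_inner_comm a v, real_inner_comm b zs,
    real_inner_comm b zk, real_inner_comm b u, real_inner_comm b v,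
    real_inner_comm zs zk, real_inner_comm zs u, real_inner_comm zs v,
    real_inner_comm zk u, real_inner_comm zk v, real_inner_comm u v]

/-- The dual update `y₁ = yₖ + c (a - b)` turns the cross terms left over by the two
three-point inequalities into a difference of the dual part of `admmEnergy`. -/
theorem multiplier_le {c : ℝ} (hc : 0 < c) (a b zs zk yk ys : G) :
    ⟪ys, a - b⟫_ℝ + (c/2) * (‖zs - zk + c⁻¹ • yk‖ ^ 2 - ‖a - zk + c⁻¹ • yk‖ ^ 2
      - ‖zs - a‖ ^ 2 + ‖a - zs + c⁻¹ • yk‖ ^ 2 - ‖a - b + c⁻¹ • yk‖ ^ 2 - ‖zs - b‖ ^ 2)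
    ≤ (c/2) * (‖zs - zk‖ ^ 2 - ‖zs - b‖ ^ 2)
      + (1/(2*c)) * (‖ys - yk‖ ^ 2 - ‖ys - (yk + c • (a - b))‖ ^ 2) := by
  have hscale : ∀ w : G, (1/(2*c)) * ‖w‖ ^ 2 = (c/2) * ‖c⁻¹ • w‖ ^ 2 := fun w => by
    rw [norm_smul, mul_pow, norm_inv, Real.norm_of_nonneg hc.le]
    field_simp
  have hinner : ⟪ys, a - b⟫_ℝ = c * ⟪c⁻¹ • ys, a - b⟫_ℝ := by
    rw [real_inner_smul_left, mul_inv_cancel_left₀ hc.ne']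
  have e1 : c⁻¹ • (ys - yk) = c⁻¹ • ys - c⁻¹ • yk := smul_sub _ _ _
  have e2 : c⁻¹ • (ys - (yk + c • (a - b))) = c⁻¹ • ys - c⁻¹ • yk - (a - b) := by
    rw [smul_sub, smul_add, inv_smul_smul₀ hc.ne', sub_sub]
  rw [hinner, mul_sub (1/(2*c)), hscale, hscale, e1, e2]
  have key := multiplier_identity a b zs zk (c⁻¹ • yk) (c⁻¹ • ys)
  linear_combination c * key + (1/2 : ℝ) * mul_nonneg hc.le (sq_nonneg ‖a - zk‖)

theorem IsZUpdate.three_point {g : G → EReal} {c : ℝ} {M : G →L[ℝ] G} {a zk yk z1 zs : G}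
    {G1 Gs : ℝ} (hz : IsZUpdate g c M a zk yk z1) (hg : ERealConvex g)
    (hM : ∀ d, 0 ≤ opSq M d) (hG1 : g z1 = G1) (hGs : g zs = Gs) :
    G1 + (c/2) * ‖a - z1 + c⁻¹ • yk‖ ^ 2 + (c/2) * ‖zs - z1‖ ^ 2 + (1/2) * opSq M (zs - z1)
      ≤ Gs + (c/2) * ‖a - zs + c⁻¹ • yk‖ ^ 2 + (1/2) * opSq M (zs - zk) := by
  have hq := (((isQuadraticAlong_norm_sq_sub (a + c⁻¹ • yk) z1 zs).const_mul (c/2)).add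
      ((isQuadraticAlong_opSq_sub M zk z1 zs).const_mul (1/2))).congr
    (q' := fun w => (c/2) * ‖a - w + c⁻¹ • yk‖ ^ 2 + (1/2) * opSq M (w - zk))
    fun w => by rw [← norm_neg (w - _), neg_sub, sub_add_eq_add_sub]
  have hmin := hg.add_le_of_isQuadraticAlong hq hz hG1 hGs
  have := hM (z1 - zk)
  linarith

end Operators

section Step

variable {H G : Type*} [NormedAddCommGroup H] [InnerProductSpace ℝ H] [CompleteSpace H]
  [NormedAddCommGroup G] [InnerProductSpace ℝ G]

theorem IsXUpdateGrad.three_point {f : H → EReal} {h : H → ℝ} {h' : H → H} {K : NNReal}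
    {A : H →L[ℝ] G} {c : ℝ} {M : H →L[ℝ] H} {xk x1 xs : H} {zk yk : G} {F1 Fs : ℝ}
    (hx : IsXUpdateGrad f h' A c M xk zk yk x1) (hf : ERealConvex f)
    (hconv : ConvexOn ℝ Set.univ h) (hgrad : ∀ p, HasGradientAt h (h' p) p)
    (hlip : LipschitzWith K h') (hMK : ∀ d, K * ‖d‖ ^ 2 ≤ opSq M d)
    (hF1 : f x1 = F1) (hFs : f xs = Fs) :
    F1 + h x1 + (c/2) * ‖A x1 - zk + c⁻¹ • yk‖ ^ 2 + (c/2) * ‖A xs - A x1‖ ^ 2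
        + (1/2) * opSq M (xs - x1)
      ≤ Fs + h xs + (c/2) * ‖A xs - zk + c⁻¹ • yk‖ ^ 2 + (1/2) * opSq M (xs - xk) := by
  have hq := (((isQuadraticAlong_inner_sub xk (h' xk) x1 xs).add
      (((isQuadraticAlong_norm_sq_sub (zk - c⁻¹ • yk) (A x1) (A xs)).comp A).const_mul
        (c/2))).add ((isQuadraticAlong_opSq_sub M xk x1 xs).const_mul (1/2))).congr
    (q' := fun w => ⟪w - xk, h' xk⟫_ℝ + (c/2) * ‖A w - zk + c⁻¹ • yk‖ ^ 2
      + (1/2) * opSq M (w - xk)) fun w => by rw [sub_add]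
  have hmin := hf.add_le_of_isQuadraticAlong hq hx hF1 hFs
  have hdesc := le_add_inner_add_of_lipschitzWith_gradient hgrad hlip xk x1
  have hgi := hconv.add_inner_le_of_hasGradientAt (Set.mem_univ xk) (Set.mem_univ xs) (hgrad xk)
  have := hMK (x1 - xk)
  simp only [inner_sub_left] at hdesc hgi hmin
  linarith

theorem admm_step_le {f : H → EReal} {g : G → EReal} {h : H → ℝ} {h' : H → H} {K : NNReal}
    {A : H →L[ℝ] G} {c : ℝ} {M₁ M₁' : H →L[ℝ] H} {M₂ M₂' : G →L[ℝ] G}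
    {xk x1 xs : H} {zk z1 yk zs ys : G} {F1 Fs G1 Gs : ℝ}
    (hf : ERealConvex f) (hg : ERealConvex g) (hconv : ConvexOn ℝ Set.univ h)
    (hgrad : ∀ p, HasGradientAt h (h' p) p) (hlip : LipschitzWith K h') (hc : 0 < c)
    (hM₁K : ∀ d, K * ‖d‖ ^ 2 ≤ opSq M₁ d) (hM₂ : ∀ d, 0 ≤ opSq M₂ d)
    (hM₁' : opLE M₁ M₁') (hM₂' : opLE M₂ M₂')
    (hx : IsXUpdateGrad f h' A c M₁ xk zk yk x1) (hz : IsZUpdate g c M₂ (A x1) zk yk z1)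
    (hAxs : A xs = zs) (hF1 : f x1 = F1) (hFs : f xs = Fs) (hG1 : g z1 = G1)
    (hGs : g zs = Gs) :
    F1 + h x1 + G1 + ⟪ys, A x1 - z1⟫_ℝ - (Fs + h xs + Gs)
      ≤ admmEnergy c M₁ M₂ xs zs ys xk zk yk
        - admmEnergy c M₁' M₂' xs zs ys x1 z1 (yk + c • (A x1 - z1)) := by
  have hX := hx.three_point hf hconv hgrad hlip hM₁K hF1 hFs
  have hZ := hz.three_point hg hM₂ hG1 hGs
  have hmul := multiplier_le hc (A x1) z1 zs zk yk ys
  have h₁ := hM₁' (xs - x1)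
  have h₂ := hM₂' (zs - z1)
  rw [hAxs] at hX
  unfold admmEnergy
  unfold opSq at *
  linarith

end Step

section Saddle

variable {H G : Type*} [NormedAddCommGroup H] [InnerProductSpace ℝ H]
  [NormedAddCommGroup G] [InnerProductSpace ℝ G]
  {f : H → EReal} {g : G → EReal} {h : H → ℝ} {A : H →L[ℝ] G} {xs : H} {zs ys : G}

theorem IsSaddle.ne_top (hsp : IsSaddle (LagrH f h g A) xs zs ys) (hfp : ERealProper f)
    (hgp : ERealProper g) : f xs ≠ ⊤ ∧ g zs ≠ ⊤ := by
  obtain ⟨p, hp⟩ := hfp.2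
  obtain ⟨q, hq⟩ := hgp.2
  have hfin : LagrH f h g A xs zs ys ≠ ⊤ :=
    ne_top_of_le_ne_top (EReal.add_ne_top (EReal.add_ne_top
      (EReal.add_ne_top hp (EReal.coe_ne_top _)) hq) (EReal.coe_ne_top _)) (hsp p q ys).2
  simpa [LagrH, EReal.add_ne_top_iff_ne_top₂, hfp.1, hgp.1, EReal.add_ne_bot_iff] using hfin

theorem IsSaddle.map_eq (hsp : IsSaddle (LagrH f h g A) xs zs ys) {Fs Gs : ℝ}
    (hFs : f xs = Fs) (hGs : g zs = Gs) : A xs = zs := by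
  have hmax := (hsp xs zs (ys + (A xs - zs))).1
  simp only [LagrH, hFs, hGs] at hmax
  norm_cast at hmax
  rw [inner_add_left, add_le_add_iff_left, add_le_iff_nonpos_right,
    real_inner_self_nonpos] at hmax
  exact sub_eq_zero.1 hmax

end Saddle

theorem stmt10_general {H G : Type*}
    [NormedAddCommGroup H] [InnerProductSpace ℝ H] [CompleteSpace H]
    [NormedAddCommGroup G] [InnerProductSpace ℝ G]
    (f : H → EReal) (g : G → EReal)
    (hfp : ERealProper f) (hfc : ERealConvex f)
    (hgp : ERealProper g) (hgc : ERealConvex g)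
    (h : H → ℝ) (h' : H → H) (L : ℝ) (hL : 0 < L)
    (hconv : ConvexOn ℝ Set.univ h)
    (hgrad : ∀ p : H, HasGradientAt h (h' p) p)
    (hlip : LipschitzWith (Real.toNNReal L) h')
    (A : H →L[ℝ] G) (c : ℝ) (hc : 0 < c)
    (M₁ : ℕ → (H →L[ℝ] H)) (M₂ : ℕ → (G →L[ℝ] G))
    (hM₁ : ∀ k : ℕ, IsSplusOp (M₁ k)) (hM₂ : ∀ k : ℕ, IsSplusOp (M₂ k))
    (hM₁L : ∀ k : ℕ, IsSplusOp (M₁ k - L • ContinuousLinearMap.id ℝ H))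
    (hM₁mono : ∀ k : ℕ, opLE (M₁ k) (M₁ (k+1)))
    (hM₂mono : ∀ k : ℕ, opLE (M₂ k) (M₂ (k+1)))
    (x : ℕ → H) (z y : ℕ → G)
    (hx : ∀ k : ℕ, IsXUpdateGrad f h' A c (M₁ k) (x k) (z k) (y k) (x (k+1)))
    (hz : ∀ k : ℕ, IsZUpdate g c (M₂ k) (A (x (k+1))) (z k) (y k) (z (k+1)))
    (hy : ∀ k : ℕ, y (k+1) = y k + c • (A (x (k+1)) - z (k+1)))
    (xs : H) (zs ys : G)
    (hsp : IsSaddle (LagrH f h g A) xs zs ys) :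
    ∀ k : ℕ, 1 ≤ k →
      LagrH f h g A ((k : ℝ)⁻¹ • ∑ i ∈ Finset.range k, x (i+1))
          ((k : ℝ)⁻¹ • ∑ i ∈ Finset.range k, z (i+1)) ys
        - (f xs + ((h xs : ℝ) : EReal) + g (A xs)) ≤
      ((((c/2) * ‖A xs - z 0‖ ^ 2
          + (1/2) * (opSq (M₁ 0) (xs - x 0) + opSq (M₂ 0) (zs - z 0))
          + (1/(2*c)) * ‖ys - y 0‖ ^ 2) / (k : ℝ) : ℝ) : EReal) := by
  intro K hK
  obtain ⟨hfs, hgs⟩ := hsp.ne_top hfp hgp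
  have hFs := (EReal.coe_toReal hfs (hfp.1 xs)).symm
  have hGs := (EReal.coe_toReal hgs (hgp.1 zs)).symm
  have hAxs : A xs = zs := hsp.map_eq hFs hGs
  have hF : ∀ i, f (x (i+1)) = (f (x (i+1))).toReal := fun i =>
    (EReal.coe_toReal (EReal.ne_top_of_add_coe_le (hx i xs) hfs) (hfp.1 _)).symm
  have hG : ∀ i, g (z (i+1)) = (g (z (i+1))).toReal := fun i =>
    (EReal.coe_toReal (EReal.ne_top_of_add_coe_le (hz i zs) hgs) (hgp.1 _)).symm
  have hM₁K : ∀ k d, (L.toNNReal : ℝ) * ‖d‖ ^ 2 ≤ opSq (M₁ k) d := fun k => by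
    rw [Real.coe_toNNReal L hL.le]; exact (hM₁L k).mul_norm_sq_le_opSq
  let E : ℕ → ℝ := fun k => admmEnergy c (M₁ k) (M₂ k) xs zs ys (x k) (z k) (y k)
  have hstep : ∀ i ∈ Finset.range K,
      (f (x (i+1))).toReal + h (x (i+1)) + (g (z (i+1))).toReal + ⟪ys, A (x (i+1)) - z (i+1)⟫_ℝ
        - ((f xs).toReal + h xs + (g zs).toReal) ≤ E i - E (i+1) := fun i _ => by
    simpa only [E, hy i] using admm_step_le hfc hgc hconv hgrad hlip hc (hM₁K i) (hM₂ i).2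
      (hM₁mono i) (hM₂mono i) (hx i) (hz i) hAxs (hF i) hFs (hG i) hGs
  have hsum := ((Finset.sum_le_sum hstep).trans_eq (Finset.sum_range_sub' E K)).trans
    (sub_le_self _ (admmEnergy_nonneg hc (hM₁ K) (hM₂ K) _ _ _ _ _ _))
  have hbound := lagrH_avg_sub_le hfc hfp.1 hgc hgp.1 hconv A
    (Finset.nonempty_range_iff.2 (by omega)) (fun i _ => hF i) (fun i _ => hG i) ys hsum
  rw [Finset.card_range] at hbound
  have hval : f xs + ((h xs : ℝ) : EReal) + g (A xs)
      = (((f xs).toReal + h xs + (g zs).toReal : ℝ) : EReal) := by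
    rw [hAxs, hFs, hGs]; norm_cast
  rw [hval, hAxs]
  exact hbound

theorem stmt10 {H G : Type*}
    [NormedAddCommGroup H] [InnerProductSpace ℝ H] [CompleteSpace H]
    [NormedAddCommGroup G] [InnerProductSpace ℝ G] [CompleteSpace G]
    (f : H → EReal) (g : G → EReal)
    (hfp : ERealProper f) (hfc : ERealConvex f) (hfl : LowerSemicontinuous f)
    (hgp : ERealProper g) (hgc : ERealConvex g) (hgl : LowerSemicontinuous g)
    (h : H → ℝ) (h' : H → H) (L : ℝ) (hL : 0 < L)
    (hconv : ConvexOn ℝ Set.univ h)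
    (hgrad : ∀ p : H, HasGradientAt h (h' p) p)
    (hlip : LipschitzWith (Real.toNNReal L) h')
    (A : H →L[ℝ] G) (c : ℝ) (hc : 0 < c)
    (M₁ : ℕ → (H →L[ℝ] H)) (M₂ : ℕ → (G →L[ℝ] G))
    (hM₁ : ∀ k : ℕ, IsSplusOp (M₁ k)) (hM₂ : ∀ k : ℕ, IsSplusOp (M₂ k))
    (hM₁L : ∀ k : ℕ, IsSplusOp (M₁ k - L • ContinuousLinearMap.id ℝ H))
    (hM₁mono : ∀ k : ℕ, opLE (M₁ k) (M₁ (k+1)))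
    (hM₂mono : ∀ k : ℕ, opLE (M₂ k) (M₂ (k+1)))
    (x : ℕ → H) (z y : ℕ → G)
    (hx : ∀ k : ℕ, IsXUpdateGrad f h' A c (M₁ k) (x k) (z k) (y k) (x (k+1)))
    (hz : ∀ k : ℕ, IsZUpdate g c (M₂ k) (A (x (k+1))) (z k) (y k) (z (k+1)))
    (hy : ∀ k : ℕ, y (k+1) = y k + c • (A (x (k+1)) - z (k+1)))
    (xs : H) (zs ys : G)
    (hsp : IsSaddle (LagrH f h g A) xs zs ys) :
    ∀ k : ℕ, 1 ≤ k →
      LagrH f h g A ((k : ℝ)⁻¹ • ∑ i ∈ Finset.range k, x (i+1))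
          ((k : ℝ)⁻¹ • ∑ i ∈ Finset.range k, z (i+1)) ys
        - (f xs + ((h xs : ℝ) : EReal) + g (A xs)) ≤
      ((((c/2) * ‖A xs - z 0‖ ^ 2
          + (1/2) * (opSq (M₁ 0) (xs - x 0) + opSq (M₂ 0) (zs - z 0))
          + (1/(2*c)) * ‖ys - y 0‖ ^ 2) / (k : ℝ) : ℝ) : EReal) :=
  stmt10_general f g hfp hfc hgp hgc h h' L hL hconv hgrad hlip A c hc M₁ M₂ hM₁ hM₂ hM₁L hM₁mono
    hM₂mono x z y hx hz hy xs zs ys hsp
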